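/- Let ρ : B₃ → GL₄(ℂ) be an irreducible 4-dimensional representation of the braid group B₃ such that ρ(σ₁) is diagonalizable with eigenvalues α₁, α₂, α₃, α₄ and such that ρ(Δ₃²) = z·I for a scalar z ∈ ℂ. Then z² = (α₁α₂α₃α₄)³, i.e. z is one of the two square roots of (α₁α₂α₃α₄)³. -/

import Mathlib

/-- The braid relations on `m` generators (standing for `σ_1,…,σ_m`). -/
def braidRels (m : ℕ) : Set (FreeGroup (Fin m)) :=
  { r | (∃ i j : Fin m, (i : ℕ) + 1 = (j : ℕ) ∧
          r = FreeGroup.of i * FreeGroup.of j * FreeGroup.of i *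
              (FreeGroup.of j * FreeGroup.of i * FreeGroup.of j)⁻¹) ∨
        (∃ i j : Fin m, (i : ℕ) + 2 ≤ (j : ℕ) ∧
          r = FreeGroup.of i * FreeGroup.of j * (FreeGroup.of j * FreeGroup.of i)⁻¹) }

/-- Artin's braid group `B_n`, with generators `σ_1,…,σ_{n-1}`. -/
def BraidGroup (n : ℕ) : Type := PresentedGroup (braidRels (n - 1))

instance (n : ℕ) : Group (BraidGroup n) := by unfold BraidGroup; infer_instance

/-- The generator `σ_{i+1}` of the braid group `B_n`, for `i : Fin (n-1)`. -/
def braidGen {n : ℕ} (i : Fin (n - 1)) : BraidGroup n := PresentedGroup.of i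

/-- The central element `Δ_n² = (σ_1 σ_2 ⋯ σ_{n-1})^n` of `B_n`. -/
def deltaSq (n : ℕ) : BraidGroup n := ((List.ofFn (fun i : Fin (n-1) => braidGen i)).prod) ^ n

/-- Irreducibility of a matrix representation: the only invariant subspaces of `ℂ^m`
are `⊥` and `⊤`. -/
def IsIrreducibleRep {G : Type*} [Group G] {m : ℕ}
    (ρ : G →* Matrix.GeneralLinearGroup (Fin m) ℂ) : Prop :=
  ∀ U : Submodule ℂ (Fin m → ℂ),
    (∀ g : G, ∀ x ∈ U, (ρ g : Matrix (Fin m) (Fin m) ℂ).mulVec x ∈ U) → U = ⊥ ∨ U = ⊤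

/-!
Put `D = ρ(σ₁σ₂σ₁)` and `W = ρ(σ₁σ₂)`. Then `D² = W³ = ρ(Δ₃²) = z`, and `D`, `W` generate the
image of `ρ`, so by irreducibility they have no common eigenvector. Since `W³ = z ≠ 0`, `W` is
diagonalisable with at most three eigenvalues, so one of its eigenspaces in `ℂ⁴` has dimension at
least `2`, and therefore every eigenspace of `D` has dimension at most `2`. Writing `z = μ²`, the
eigenspaces of `D` for `μ` and `-μ` together have dimension at least `4`, so both have dimension
`2` and `det D = μ²(-μ)² = z²`. Finally `σ₂` is conjugate to `σ₁`, so
`det D = (det ρ(σ₁))³ = (α₁α₂α₃α₄)³`.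
-/

open scoped Matrix
open Module Polynomial

theorem braidGen_braid_rel :
    (braidGen 0 * braidGen 1 * braidGen 0 : BraidGroup 3) =
      braidGen 1 * braidGen 0 * braidGen 1 := by
  rw [← mul_inv_eq_one]
  exact (QuotientGroup.eq_one_iff _).mpr <| Subgroup.subset_normalClosure <|
    Or.inl ⟨0, 1, rfl, rfl⟩

theorem deltaSq_three : deltaSq 3 = (braidGen 0 * braidGen 1) ^ 3 := by
  simp [deltaSq, List.ofFn_succ]

theorem deltaSq_three_eq_sq : deltaSq 3 = (braidGen 0 * braidGen 1 * braidGen 0) ^ 2 := by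
  rw [deltaSq_three, sq, pow_three]
  nth_rw 2 [braidGen_braid_rel]
  group

theorem closure_braidGen_products_eq_top :
    Subgroup.closure {braidGen 0 * braidGen 1 * braidGen 0, braidGen 0 * braidGen 1} =
      (⊤ : Subgroup (BraidGroup 3)) := by
  set H := Subgroup.closure {(braidGen 0 * braidGen 1 * braidGen 0 : BraidGroup 3),
    braidGen 0 * braidGen 1}
  have hW : braidGen 0 * braidGen 1 ∈ H := Subgroup.subset_closure (by simp)
  have hD : braidGen 0 * braidGen 1 * braidGen 0 ∈ H := Subgroup.subset_closure (by simp)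
  have h0 : braidGen 0 ∈ H := by
    simpa [mul_assoc] using H.mul_mem (H.inv_mem hW) hD
  have h1 : braidGen 1 ∈ H := by
    simpa using H.mul_mem (H.inv_mem h0) hW
  refine eq_top_iff.mpr fun g _ => PresentedGroup.generated_by _ H (fun i => ?_) g
  fin_cases i
  exacts [h0, h1]

theorem map_braidGen_one_eq_map_braidGen_zero {M : Type*} [CommGroup M] (χ : BraidGroup 3 →* M) :
    χ (braidGen 1) = χ (braidGen 0) := by
  have h : (braidGen 1 : BraidGroup 3) =
      (braidGen 0 * braidGen 1) * braidGen 0 * (braidGen 0 * braidGen 1)⁻¹ := by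
    rw [braidGen_braid_rel]; group
  rw [h, map_mul, map_mul, map_inv]
  exact mul_inv_cancel_comm _ _

theorem exists_mulVec_eq_smul_of_mem_closure {G K : Type*} [Group G] [Field K] {m : ℕ}
    (ρ : G →* Matrix.GeneralLinearGroup (Fin m) K) {S : Set G} {v : Fin m → K}
    (hS : ∀ g ∈ S, ∃ c : K, (ρ g : Matrix (Fin m) (Fin m) K) *ᵥ v = c • v) {g : G}
    (hg : g ∈ Subgroup.closure S) :
    ∃ c : K, (ρ g : Matrix (Fin m) (Fin m) K) *ᵥ v = c • v := by
  induction hg using Subgroup.closure_induction with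
  | mem g hg => exact hS g hg
  | one => exact ⟨1, by simp⟩
  | mul g h _ _ hg hh =>
    obtain ⟨c, hc⟩ := hg
    obtain ⟨d, hd⟩ := hh
    exact ⟨c * d, by
      rw [map_mul, Units.val_mul, ← Matrix.mulVec_mulVec, hd, Matrix.mulVec_smul, hc, smul_smul,
        mul_comm]⟩
  | inv g _ hg =>
    obtain ⟨c, hc⟩ := hg
    have hv : v = c • (ρ g⁻¹ : Matrix (Fin m) (Fin m) K) *ᵥ v := by
      rw [← Matrix.mulVec_smul, ← hc, Matrix.mulVec_mulVec, ← Units.val_mul, ← map_mul,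
        inv_mul_cancel, map_one, Units.val_one, Matrix.one_mulVec]
    refine ⟨c⁻¹, ?_⟩
    rcases eq_or_ne c 0 with rfl | hc0
    · rw [zero_smul] at hv
      rw [hv, Matrix.mulVec_zero, smul_zero]
    · rw [hv, smul_smul, inv_mul_cancel₀ hc0, one_smul, ← hv]

theorem IsIrreducibleRep.eq_zero_of_forall_mulVec_eq_smul {G : Type*} [Group G] {m : ℕ}
    {ρ : G →* Matrix.GeneralLinearGroup (Fin m) ℂ} (hρ : IsIrreducibleRep ρ) (hm : 1 < m)
    {S : Set G} (hS : Subgroup.closure S = ⊤) {v : Fin m → ℂ}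
    (hv : ∀ g ∈ S, ∃ c : ℂ, (ρ g : Matrix (Fin m) (Fin m) ℂ) *ᵥ v = c • v) : v = 0 := by
  have hinv : ∀ g : G, ∀ x ∈ ℂ ∙ v, (ρ g : Matrix (Fin m) (Fin m) ℂ) *ᵥ x ∈ ℂ ∙ v := by
    intro g x hx
    obtain ⟨a, rfl⟩ := Submodule.mem_span_singleton.mp hx
    obtain ⟨c, hc⟩ := exists_mulVec_eq_smul_of_mem_closure ρ hv (hS ▸ Subgroup.mem_top g)
    rw [Matrix.mulVec_smul, hc]
    exact Submodule.smul_mem _ _ (Submodule.smul_mem _ _ (Submodule.mem_span_singleton_self v))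
  rcases hρ _ hinv with h | h
  · exact Submodule.span_singleton_eq_bot.mp h
  · have := finrank_span_le_card (R := ℂ) ({v} : Set (Fin m → ℂ))
    rw [h, finrank_top, Module.finrank_fin_fun, Set.toFinset_singleton,
      Finset.card_singleton] at this
    omega

theorem IsIrreducibleRep.disjoint_eigenspace {G : Type*} [Group G] {m : ℕ}
    {ρ : G →* Matrix.GeneralLinearGroup (Fin m) ℂ} (hρ : IsIrreducibleRep ρ) (hm : 1 < m)
    {g h : G} (hgh : Subgroup.closure {g, h} = ⊤) (a b : ℂ) :
    Disjoint (Module.End.eigenspace (Matrix.toLinAlgEquiv' (ρ g : Matrix (Fin m) (Fin m) ℂ)) a)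
      (Module.End.eigenspace (Matrix.toLinAlgEquiv' (ρ h : Matrix (Fin m) (Fin m) ℂ)) b) := by
  refine Submodule.disjoint_def.mpr fun v hva hvb => hρ.eq_zero_of_forall_mulVec_eq_smul hm hgh ?_
  rintro k (rfl | rfl)
  · exact ⟨a, by rw [← Matrix.toLinAlgEquiv'_apply, ← Module.End.mem_eigenspace_iff]; exact hva⟩
  · exact ⟨b, by rw [← Matrix.toLinAlgEquiv'_apply, ← Module.End.mem_eigenspace_iff]; exact hvb⟩

theorem Submodule.finrank_finset_sup_le_sum {K V ι : Type*} [DivisionRing K] [AddCommGroup V]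
    [Module K V] [FiniteDimensional K V] (s : Finset ι) (p : ι → Submodule K V) :
    finrank K ↥(s.sup p) ≤ ∑ i ∈ s, finrank K (p i) := by
  classical
  induction s using Finset.induction_on with
  | empty => simp
  | insert i s hi ih =>
    rw [Finset.sup_insert, Finset.sum_insert hi]
    exact (Submodule.finrank_add_le_finrank_add_finrank _ _).trans (Nat.add_le_add_left ih _)

namespace Module.End

variable {K V : Type*} [Field K] [AddCommGroup V] [Module K V]

theorem range_le_eigenspace_of_mul_eq_zero {f : End K V} {a b : K}
    (h : (f - a • 1) * (f - b • 1) = 0) : LinearMap.range (f - b • 1) ≤ f.eigenspace a := by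
  rintro _ ⟨x, rfl⟩
  rw [eigenspace_def, LinearMap.mem_ker, ← mul_apply, h, LinearMap.zero_apply]

variable [FiniteDimensional K V]

theorem finrank_le_finrank_eigenspace_add_finrank_eigenspace {f : End K V} {a b : K}
    (h : (f - a • 1) * (f - b • 1) = 0) :
    finrank K V ≤ finrank K (f.eigenspace a) + finrank K (f.eigenspace b) := by
  rw [← LinearMap.finrank_range_add_finrank_ker (f - b • 1), ← eigenspace_def]
  exact Nat.add_le_add_right (Submodule.finrank_mono (range_le_eigenspace_of_mul_eq_zero h)) _

theorem det_eq_of_mul_eq_zero {f : End K V} {a b : K} (h : (f - a • 1) * (f - b • 1) = 0) :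
    f.det = a ^ finrank K (f.eigenspace a) * b ^ (finrank K V - finrank K (f.eigenspace a)) := by
  have hmaps : f.eigenspace a ≤ (f.eigenspace a).comap f := fun x hx => by
    rw [Submodule.mem_comap, mem_eigenspace_iff.mp hx]
    exact Submodule.smul_mem _ _ hx
  have hres : LinearMap.restrict (p := f.eigenspace a) (q := f.eigenspace a) f hmaps =
      a • LinearMap.id := by
    ext x
    simp [LinearMap.restrict_apply, mem_eigenspace_iff.mp x.2]
  have hquot : (f.eigenspace a).mapQ (f.eigenspace a) f hmaps = b • LinearMap.id := by
    ext x
    simp only [LinearMap.coe_comp, Function.comp_apply, Submodule.mkQ_apply, Submodule.mapQ_apply,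
      LinearMap.smul_apply, LinearMap.id_apply]
    rw [← Submodule.Quotient.mk_smul, Submodule.Quotient.eq]
    exact range_le_eigenspace_of_mul_eq_zero h ⟨x, rfl⟩
  rw [LinearMap.det_eq_det_mul_det _ f hmaps, hres, hquot, LinearMap.det_smul, LinearMap.det_smul,
    LinearMap.det_id, LinearMap.det_id, mul_one, mul_one, Submodule.finrank_quotient]

theorem exists_finrank_le_natDegree_mul_finrank_eigenspace [IsAlgClosed K] {f : End K V}
    {p : K[X]} (hp : Squarefree p) (hfp : aeval f p = 0) :
    ∃ μ, finrank K V ≤ p.natDegree * finrank K (f.eigenspace μ) := by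
  classical
  set s := p.roots.toFinset
  have htop : s.sup f.eigenspace = ⊤ := by
    rw [eq_top_iff, ← (isSemisimple_of_squarefree_aeval_eq_zero hp hfp).iSup_eigenspace_eq_top]
    refine iSup_le fun μ => ?_
    by_cases hμ : f.eigenspace μ = ⊥
    · simp [hμ]
    obtain ⟨x, hx, hx0⟩ := Submodule.exists_mem_ne_zero_of_ne_bot hμ
    have hroot : p.eval μ • x = 0 := by
      rw [← aeval_apply_of_hasEigenvector ⟨hx, hx0⟩, hfp, LinearMap.zero_apply]
    refine Finset.le_sup (f := f.eigenspace) (Multiset.mem_toFinset.mpr ?_)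
    exact (mem_roots hp.ne_zero).mpr ((smul_eq_zero.mp hroot).resolve_right hx0)
  have hsum : finrank K V ≤ ∑ μ ∈ s, finrank K (f.eigenspace μ) := by
    rw [← finrank_top K V, ← htop]
    exact Submodule.finrank_finset_sup_le_sum s _
  have hcard : s.card ≤ p.natDegree := (Multiset.toFinset_card_le _).trans (card_roots' p)
  rcases s.eq_empty_or_nonempty with hs | hs
  · rw [hs, Finset.sum_empty, Nat.le_zero] at hsum
    exact ⟨0, by rw [hsum]; exact Nat.zero_le _⟩
  obtain ⟨μ, -, hμ⟩ := s.exists_max_image (fun μ => finrank K (f.eigenspace μ)) hs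
  refine ⟨μ, hsum.trans ?_⟩
  calc ∑ ν ∈ s, finrank K (f.eigenspace ν) ≤ s.card * finrank K (f.eigenspace μ) :=
        Finset.sum_le_card_nsmul _ _ _ hμ
    _ ≤ p.natDegree * finrank K (f.eigenspace μ) := Nat.mul_le_mul_right _ hcard

theorem det_eq_sq_of_sq_eq_of_pow_three_eq [IsAlgClosed K] [CharZero K] (hV : finrank K V = 4)
    {D W : End K V} {z : K} (hz : z ≠ 0) (hD : D ^ 2 = z • 1) (hW : W ^ 3 = z • 1)
    (hDW : ∀ a b, Disjoint (D.eigenspace a) (W.eigenspace b)) : D.det = z ^ 2 := by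
  obtain ⟨η, hη⟩ : ∃ η, finrank K V ≤ 3 * finrank K (W.eigenspace η) := by
    simpa only [natDegree_X_pow_sub_C] using exists_finrank_le_natDegree_mul_finrank_eigenspace
      (separable_X_pow_sub_C z (by norm_num) hz).squarefree
      (by simp [hW, Algebra.algebraMap_eq_smul_one])
  have hle : ∀ δ, finrank K (D.eigenspace δ) ≤ 2 := fun δ => by
    have := Submodule.finrank_add_finrank_le_of_disjoint (hDW δ η)
    omega
  obtain ⟨μ, rfl⟩ := IsAlgClosed.exists_pow_nat_eq z two_pos
  have hfac : (D - μ • 1) * (D - (-μ) • 1) = 0 := by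
    rw [← sub_eq_zero.mpr hD]
    simp only [sub_mul, mul_sub, smul_mul_assoc, mul_smul_comm, one_mul, mul_one, sq]
    module
  have hsum := finrank_le_finrank_eigenspace_add_finrank_eigenspace hfac
  have hμ : finrank K (D.eigenspace μ) = 2 := by
    have := hle μ; have := hle (-μ); omega
  rw [det_eq_of_mul_eq_zero hfac, hμ, hV]
  ring

end Module.End

/-- for an irreducible 4-dimensional representation of `B₃` with `ρ(σ₁)`
diagonalizable with eigenvalues `α₁, α₂, α₃, α₄` and `ρ(Δ₃²) = z·I`, one has
`z² = (α₁α₂α₃α₄)³`, i.e. `z` is one of the two square roots of `(α₁α₂α₃α₄)³`. -/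
theorem braid3_scalar_dim4 (ρ : BraidGroup 3 →* Matrix.GeneralLinearGroup (Fin 4) ℂ)
    (hirr : IsIrreducibleRep ρ) (α₁ α₂ α₃ α₄ : ℂ)
    (hdiag : ∃ C : Matrix.GeneralLinearGroup (Fin 4) ℂ,
      (ρ (braidGen 0) : Matrix (Fin 4) (Fin 4) ℂ) =
        (C : Matrix (Fin 4) (Fin 4) ℂ) * Matrix.diagonal ![α₁, α₂, α₃, α₄] *
          (C⁻¹ : Matrix (Fin 4) (Fin 4) ℂ))
    (z : ℂ)
    (hz : (ρ (deltaSq 3) : Matrix (Fin 4) (Fin 4) ℂ) = z • (1 : Matrix (Fin 4) (Fin 4) ℂ)) :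
    z ^ 2 = (α₁ * α₂ * α₃ * α₄) ^ 3 := by
  let φ : BraidGroup 3 →* Module.End ℂ (Fin 4 → ℂ) :=
    Matrix.toLinAlgEquiv'.toMonoidHom.comp ((Units.coeHom _).comp ρ)
  let χ : BraidGroup 3 →* ℂˣ := Matrix.GeneralLinearGroup.det.comp ρ
  have hφΔ : φ (deltaSq 3) = z • 1 := by
    simp [φ, hz]
  have hz0 : z ≠ 0 := by
    rintro rfl
    rw [zero_smul] at hz
    exact not_isUnit_zero (hz ▸ (ρ (deltaSq 3)).isUnit)
  have hdet : LinearMap.det (φ (braidGen 0 * braidGen 1 * braidGen 0)) = z ^ 2 :=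
    Module.End.det_eq_sq_of_sq_eq_of_pow_three_eq (W := φ (braidGen 0 * braidGen 1))
      (Module.finrank_fin_fun ℂ) hz0
      (by rw [← map_pow, ← deltaSq_three_eq_sq, hφΔ]) (by rw [← map_pow, ← deltaSq_three, hφΔ])
      (hirr.disjoint_eigenspace (by norm_num) closure_braidGen_products_eq_top)
  have hχ : ∀ g, LinearMap.det (φ g) = χ g := fun g => LinearMap.det_toLin' _
  obtain ⟨C, hC⟩ := hdiag
  have hχ₀ : (χ (braidGen 0) : ℂ) = α₁ * α₂ * α₃ * α₄ := by
    rw [MonoidHom.comp_apply, Matrix.GeneralLinearGroup.val_det_apply, hC,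
      Matrix.det_conj C.isUnit, Matrix.det_diagonal, Fin.prod_univ_four]
    rfl
  rw [← hdet, hχ, map_mul, map_mul, map_braidGen_one_eq_map_braidGen_zero]
  push_cast
  rw [hχ₀]
  ring
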